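/- (Asymmetry of closeness, the 'antisymmetry' claim of Theorem 5.2.) Let ρ be an ordinal and x, u, v : ℕ → X sequences. It cannot happen simultaneously that for every m ∈ ℕ, {n : d (u n) (x n) ♯ ω^ρ · m ≤ d (v n) (x n)} ∈ F and for every m ∈ ℕ, {n : d (v n) (x n) ♯ ω^ρ · m ≤ d (u n) (x n)} ∈ F. -/

import Mathlib

open Filter Ordinal
open scoped Ordinal

universe u

/-- Natural (Hessenberg) sum of ordinals, as `Ordinal.nadd` was defined in the older Mathlib
(removed from the current Mathlib). -/
noncomputable def Ordinal.nadd (a b : Ordinal.{u}) : Ordinal.{u} :=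
  max (⨆ x : Set.Iio a, Order.succ (Ordinal.nadd x.1 b))
    (⨆ x : Set.Iio b, Order.succ (Ordinal.nadd a x.1))
termination_by (a, b)
decreasing_by all_goals cases x; decreasing_tactic

infixl:65 " ♯ " => Ordinal.nadd

/-- Sequences `x, y : ℕ → X` are `ρ`-limitedly distant if there exists `μ ∈ ℕ` with
`{n : d (x n) (y n) ≤ ω^ρ · μ} ∈ F`. -/
def LimitedlyDistant {X : Type*} (d : X → X → Ordinal) (F : Ultrafilter ℕ)
    (ρ : Ordinal) (x y : ℕ → X) : Prop :=
  ∃ μ : ℕ, {n : ℕ | d (x n) (y n) ≤ ω ^ ρ * μ} ∈ F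

/-!
Adding a positive ordinal on the right strictly increases an ordinal under the natural sum.
Hence on a single index `n` in both sets for `m = 1` we would get
`d (u n) (x n) < d (v n) (x n) < d (u n) (x n)`; such an `n` exists since `F` is a proper filter.
-/

namespace Ordinal

theorem nadd_lt_nadd_right {a b : Ordinal.{u}} (h : a < b) (c : Ordinal.{u}) :
    a ♯ c < b ♯ c := by
  rw [Ordinal.nadd.eq_1 b c]
  refine (Order.lt_succ _).trans_le (le_max_of_le_left ?_)
  exact le_ciSup (f := fun y : Set.Iio b => Order.succ (y.1 ♯ c)) bddAbove_of_small ⟨a, h⟩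

theorem nadd_lt_nadd_left {b c : Ordinal.{u}} (h : b < c) (a : Ordinal.{u}) :
    a ♯ b < a ♯ c := by
  rw [Ordinal.nadd.eq_1 a c]
  refine (Order.lt_succ _).trans_le (le_max_of_le_right ?_)
  exact le_ciSup (f := fun y : Set.Iio c => Order.succ (a ♯ y.1)) bddAbove_of_small ⟨b, h⟩

theorem le_nadd_self (a b : Ordinal.{u}) : a ≤ a ♯ b := by
  induction a using WellFoundedLT.induction with
  | _ a ih => exact le_of_forall_lt fun c hc => (ih c hc).trans_lt (nadd_lt_nadd_right hc b)

theorem lt_nadd_of_pos (a : Ordinal.{u}) {c : Ordinal.{u}} (hc : 0 < c) : a < a ♯ c :=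
  (le_nadd_self a 0).trans_lt (nadd_lt_nadd_left hc a)

theorem not_nadd_le_of_nadd_le {a b c : Ordinal.{u}} (hc : 0 < c) (h : a ♯ c ≤ b) :
    ¬ b ♯ c ≤ a := fun h' =>
  lt_irrefl a <| calc
    a < a ♯ c := lt_nadd_of_pos a hc
    _ ≤ b := h
    _ < b ♯ c := lt_nadd_of_pos b hc
    _ ≤ a := h'

end Ordinal

theorem closeness_asymm_general
    (X : Type*) (d : X → X → Ordinal)
    (F : Ultrafilter ℕ)
    (ρ : Ordinal) (x u v : ℕ → X) :
    ¬ ((∀ m : ℕ, {n : ℕ | d (u n) (x n) ♯ ω ^ ρ * m ≤ d (v n) (x n)} ∈ F) ∧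
       (∀ m : ℕ, {n : ℕ | d (v n) (x n) ♯ ω ^ ρ * m ≤ d (u n) (x n)} ∈ F)) := by
  rintro ⟨huv, hvu⟩
  obtain ⟨n, huv_n, hvu_n⟩ := Ultrafilter.nonempty_of_mem (inter_mem (huv 1) (hvu 1))
  simp only [Set.mem_ofPred_eq, Nat.cast_one, mul_one] at huv_n hvu_n
  exact not_nadd_le_of_nadd_le (opow_pos ρ omega0_pos) huv_n hvu_n

theorem closeness_asymm
    (X : Type*) (d : X → X → Ordinal)
    (hd0 : ∀ a b : X, d a b = 0 ↔ a = b)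
    (hdsymm : ∀ a b : X, d a b = d b a)
    (hdtri : ∀ a b c : X, d a c ≤ d a b ♯ d b c)
    (F : Ultrafilter ℕ) (hF : ∀ s : Set ℕ, sᶜ.Finite → s ∈ F)
    (ρ : Ordinal) (x u v : ℕ → X) :
    ¬ ((∀ m : ℕ, {n : ℕ | d (u n) (x n) ♯ ω ^ ρ * m ≤ d (v n) (x n)} ∈ F) ∧
       (∀ m : ℕ, {n : ℕ | d (v n) (x n) ♯ ω ^ ρ * m ≤ d (u n) (x n)} ∈ F)) :=
  closeness_asymm_general X d F ρ x u v
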